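/- arXiv:1409.2748 — 7 statements merged into one kernel-verified Lean document; each statement's English description precedes it below -/
import Mathlib

section
/- For every integer n ≥ 2 and every real number β, the initial value problem 2ψ''(r) + (n−2)((ψ'(r))² − 1)/ψ(r) + βψ(r) = 0 on (0,∞), with ψ(0) = 0, ψ'(0) = 1, ψ''(0) = 0, has at most one solution: if ψ₁ and ψ₂ are both functions in C^∞([0,∞),ℝ), positive on (0,∞), satisfying the equation for all r > 0 together with these initial conditions, then ψ₁(r) = ψ₂(r) for all r ≥ 0. -/
open Set

lemma keyA (n : ℕ) (hn : 2 ≤ n) (β : ℝ) (ψ : ℝ → ℝ)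
    (hsmooth : ContDiffOn ℝ (⊤ : ℕ∞) ψ (Ici 0))
    (hpos : ∀ r > (0:ℝ), 0 < ψ r)
    (h0 : ψ 0 = 0) (h1 : derivWithin ψ (Ici 0) 0 = 1)
    (heq : ∀ r > (0:ℝ),
      2 * deriv (deriv ψ) r + ((n:ℝ)-2) * ((deriv ψ r)^2 - 1)/ψ r + β * ψ r = 0) :
    ∀ r > (0:ℝ), deriv (deriv ψ) r = -(β / n) * ψ r := by
  have hn0 : (n:ℝ) ≠ 0 := by positivity
  -- smoothness on the open half-line
  have hψo : ContDiffOn ℝ (⊤ : ℕ∞) ψ (Ioi 0) := hsmooth.mono Ioi_subset_Ici_self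
  have hd1 : ContDiffOn ℝ (⊤ : ℕ∞) (deriv ψ) (Ioi 0) := hψo.deriv_of_isOpen isOpen_Ioi (by simp)
  have hψd : ∀ r ∈ Ioi (0:ℝ), HasDerivAt ψ (deriv ψ r) r := fun r hr =>
    ((hψo.contDiffAt (isOpen_Ioi.mem_nhds hr)).differentiableAt (by simp)).hasDerivAt
  have hψd2 : ∀ r ∈ Ioi (0:ℝ), HasDerivAt (deriv ψ) (deriv (deriv ψ) r) r := fun r hr =>
    ((hd1.contDiffAt (isOpen_Ioi.mem_nhds hr)).differentiableAt (by simp)).hasDerivAt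
  -- multiplied form of the equation
  have key : ∀ r > (0:ℝ),
      2 * deriv (deriv ψ) r * ψ r + ((n:ℝ)-2) * ((deriv ψ r)^2 - 1) + β * (ψ r)^2 = 0 := by
    intro r hr
    have hne : ψ r ≠ 0 := (hpos r hr).ne'
    have := heq r hr
    field_simp at this
    linarith [this]
  rcases eq_or_lt_of_le hn with h2 | h3
  · -- n = 2
    intro r hr
    have hk := key r hr
    have hc : ((n:ℝ) - 2) = 0 := by rw [← h2]; norm_num
    rw [hc] at hk
    have hne : ψ r ≠ 0 := (hpos r hr).ne'
    have h2' : (n:ℝ) = 2 := by rw [← h2]; norm_num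
    rw [h2']
    have hψr := (hpos r hr).ne'
    field_simp
    nlinarith [hk, sq_nonneg (ψ r), (hpos r hr)]
  · -- n ≥ 3
    obtain ⟨m, rfl⟩ : ∃ m, n = m + 3 := ⟨n - 3, by omega⟩
    set c : ℝ := β / (m+3:ℕ) with hc
    set E : ℝ → ℝ := fun r => (ψ r)^(m+1) * ((deriv ψ r)^2 - 1) + c * (ψ r)^(m+3) with hE
    have hβ : β = c * ((m:ℝ)+3) := by
      rw [hc]; push_cast; field_simp
    -- E has zero derivative on Ioi 0
    have hE' : ∀ r ∈ Ioi (0:ℝ), HasDerivAt E 0 r := by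
      intro r hr
      have h1' := hψd r hr
      have h2' := hψd2 r hr
      have hD : HasDerivAt E
          ((↑(m+1) * (ψ r)^m * deriv ψ r) * ((deriv ψ r)^2 - 1)
            + (ψ r)^(m+1) * (2 * (deriv ψ r)^1 * deriv (deriv ψ) r)
            + c * (↑(m+3) * (ψ r)^(m+2) * deriv ψ r)) r := by
        have ha : HasDerivAt (fun r => (ψ r)^(m+1)) (↑(m+1) * (ψ r)^m * deriv ψ r) r := by
          simpa using h1'.fun_pow (m+1)
        have hb : HasDerivAt (fun r => (deriv ψ r)^2 - 1)
            (2 * (deriv ψ r)^1 * deriv (deriv ψ) r) r := by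
          simpa using (h2'.pow 2).sub_const 1
        have hcc : HasDerivAt (fun r => c * (ψ r)^(m+3))
            (c * (↑(m+3) * (ψ r)^(m+2) * deriv ψ r)) r := by
          simpa using ((h1'.pow (m+3)).const_mul c)
        simpa [hE] using (ha.fun_mul hb).fun_add hcc
      convert hD using 1
      have hk := key r hr
      rw [hβ] at hk
      have hk2 : 2 * deriv (deriv ψ) r * ψ r + ((m:ℝ)+1) * ((deriv ψ r)^2 - 1)
          + c * ((m:ℝ)+3) * (ψ r)^2 = 0 := by
        push_cast at hk; linear_combination hk
      push_cast
      linear_combination (-((ψ r)^m * deriv ψ r)) * hk2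
    -- E is constant on Ioi 0
    have hEconst : ∀ x ∈ Ioi (0:ℝ), ∀ y ∈ Ioi (0:ℝ), E x = E y := by
      have h : ∀ x y : ℝ, 0 < x → x ≤ y → E y = E x := by
        intro x y hx hxy
        have hcont : ContinuousOn E (Icc x y) := fun t ht =>
          ((hE' t (lt_of_lt_of_le hx ht.1)).continuousAt).continuousWithinAt
        have hderiv : ∀ t ∈ Ico x y, HasDerivWithinAt E 0 (Ici t) t := fun t ht =>
          (hE' t (lt_of_lt_of_le hx ht.1)).hasDerivWithinAt
        exact constant_of_has_deriv_right_zero hcont hderiv y (right_mem_Icc.2 hxy)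
      intro x hx y hy
      rcases le_total x y with h' | h'
      · exact (h x y hx h').symm
      · exact h y x hy h'
    -- E vanishes identically on Ioi 0 (limit at 0 is 0)
    have hEr0 : ∀ r ∈ Ioi (0:ℝ), E r = 0 := by
      intro r hr
      set F : ℝ → ℝ := fun s =>
        (ψ s)^(m+1) * ((derivWithin ψ (Ici 0) s)^2 - 1) + c * (ψ s)^(m+3) with hF
      have hFE : ∀ s ∈ Ioi (0:ℝ), F s = E s := by
        intro s hs
        simp only [hF, hE, derivWithin_of_mem_nhds (Ici_mem_nhds (mem_Ioi.1 hs))]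
      have hcψ : ContinuousWithinAt ψ (Ici 0) 0 := (hsmooth.continuousOn) 0 self_mem_Ici
      have hcd : ContinuousWithinAt (derivWithin ψ (Ici 0)) (Ici 0) 0 :=
        (hsmooth.continuousOn_derivWithin (uniqueDiffOn_Ici 0) (by simp)) 0 self_mem_Ici
      have hFc : ContinuousWithinAt F (Ici 0) 0 :=
        ((hcψ.pow (m+1)).mul ((hcd.pow 2).sub continuousWithinAt_const)).add
          (continuousWithinAt_const.mul (hcψ.pow (m+3)))
      have hF0 : F 0 = 0 := by simp [hF, h0]
      have ht1 : Filter.Tendsto F (nhdsWithin 0 (Ioi 0)) (nhds 0) := by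
        have h' := hFc.tendsto
        rw [hF0] at h'
        exact h'.mono_left (nhdsWithin_mono (0:ℝ) Ioi_subset_Ici_self)
      have ht2 : Filter.Tendsto F (nhdsWithin 0 (Ioi 0)) (nhds (E r)) := by
        apply Filter.Tendsto.congr' _ (tendsto_const_nhds (α := ℝ) (x := E r))
        filter_upwards [self_mem_nhdsWithin] with s hs
        rw [hFE s hs]
        exact hEconst r hr s hs
      have : E r = 0 := tendsto_nhds_unique ht2 ht1
      exact this
    -- conclude
    intro r hr
    have hE0 : (ψ r)^(m+1) * ((deriv ψ r)^2 - 1) + c * (ψ r)^(m+3) = 0 := hEr0 r hr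
    have hne : ψ r ≠ 0 := (hpos r hr).ne'
    have hpow : (ψ r)^(m+1) ≠ 0 := pow_ne_zero _ hne
    have fact : (deriv ψ r)^2 - 1 = -c * (ψ r)^2 := by
      have h' : (ψ r)^(m+1) * ((deriv ψ r)^2 - 1) = (ψ r)^(m+1) * (-c * (ψ r)^2) := by
        linear_combination hE0
      exact mul_left_cancel₀ hpow h'
    have hk := key r hr
    rw [hβ] at hk
    push_cast at hk
    have h2 : (2 * deriv (deriv ψ) r + 2 * c * ψ r) * ψ r = 0 := by
      linear_combination hk - ((m:ℝ)+1) * fact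
    have h3' : 2 * deriv (deriv ψ) r + 2 * c * ψ r = 0 :=
      (mul_eq_zero.1 h2).resolve_right hne
    linarith


/-- Uniqueness for the constant scalar curvature IVP
`2ψ'' + (n-2)((ψ')²-1)/ψ + βψ = 0`, `ψ(0)=0`, `ψ'(0)=1`, `ψ''(0)=0`. -/
theorem uniqueness_constant_scalar_curvature_ODE
    (n : ℕ) (hn : 2 ≤ n) (β : ℝ) (ψ₁ ψ₂ : ℝ → ℝ)
    (hsmooth₁ : ContDiffOn ℝ (⊤ : ℕ∞) ψ₁ (Ici 0))
    (hsmooth₂ : ContDiffOn ℝ (⊤ : ℕ∞) ψ₂ (Ici 0))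
    (hpos₁ : ∀ r > (0 : ℝ), 0 < ψ₁ r) (hpos₂ : ∀ r > (0 : ℝ), 0 < ψ₂ r)
    (hinit₁₀ : ψ₁ 0 = 0) (hinit₁₁ : derivWithin ψ₁ (Ici 0) 0 = 1)
    (hinit₁₂ : derivWithin (derivWithin ψ₁ (Ici 0)) (Ici 0) 0 = 0)
    (hinit₂₀ : ψ₂ 0 = 0) (hinit₂₁ : derivWithin ψ₂ (Ici 0) 0 = 1)
    (hinit₂₂ : derivWithin (derivWithin ψ₂ (Ici 0)) (Ici 0) 0 = 0)
    (heq₁ : ∀ r > (0 : ℝ),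
      2 * deriv (deriv ψ₁) r + ((n : ℝ) - 2) * ((deriv ψ₁ r) ^ 2 - 1) / ψ₁ r + β * ψ₁ r = 0)
    (heq₂ : ∀ r > (0 : ℝ),
      2 * deriv (deriv ψ₂) r + ((n : ℝ) - 2) * ((deriv ψ₂ r) ^ 2 - 1) / ψ₂ r + β * ψ₂ r = 0) :
    ∀ r ≥ (0 : ℝ), ψ₁ r = ψ₂ r := by
  set c : ℝ := β / n with hc
  have hA₁ := keyA n hn β ψ₁ hsmooth₁ hpos₁ hinit₁₀ hinit₁₁ heq₁
  have hA₂ := keyA n hn β ψ₂ hsmooth₂ hpos₂ hinit₂₀ hinit₂₁ heq₂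
  -- set up the first-order system
  set g₁ : ℝ → ℝ := derivWithin ψ₁ (Ici 0) with hg₁
  set g₂ : ℝ → ℝ := derivWithin ψ₂ (Ici 0) with hg₂
  set f : ℝ → ℝ × ℝ := fun t => (ψ₁ t - ψ₂ t, g₁ t - g₂ t) with hf
  set v : ℝ → ℝ × ℝ → ℝ × ℝ := fun _ p => (p.2, -c * p.1) with hv
  set K : NNReal := ⟨max 1 |c|, le_trans zero_le_one (le_max_left _ _)⟩ with hK
  have e₁ : derivWithin ψ₁ (Ici 0) 0 = 1 := hinit₁₁
  have e₂ : derivWithin ψ₂ (Ici 0) 0 = 1 := hinit₂₁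
  have e₃ : derivWithin (derivWithin ψ₁ (Ici 0)) (Ici 0) 0 = 0 := hinit₁₂
  have e₄ : derivWithin (derivWithin ψ₂ (Ici 0)) (Ici 0) 0 = 0 := hinit₂₂
  have hlip : ∀ t, LipschitzWith K (v t) := by
    intro t
    apply LipschitzWith.of_dist_le_mul
    intro p q
    rw [Prod.dist_eq, Prod.dist_eq]
    simp only [hv, Real.dist_eq]
    have hd1 : (0:ℝ) ≤ max |p.1 - q.1| |p.2 - q.2| :=
      le_trans (abs_nonneg _) (le_max_left _ _)
    have h1 : |p.2 - q.2| ≤ (max 1 |c|) * max |p.1 - q.1| |p.2 - q.2| := by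
      calc |p.2 - q.2| ≤ max |p.1 - q.1| |p.2 - q.2| := le_max_right _ _
        _ = 1 * max |p.1 - q.1| |p.2 - q.2| := (one_mul _).symm
        _ ≤ (max 1 |c|) * max |p.1 - q.1| |p.2 - q.2| :=
            mul_le_mul_of_nonneg_right (le_max_left _ _) hd1
    have h2 : |(-c * p.1) - (-c * q.1)| ≤ (max 1 |c|) * max |p.1 - q.1| |p.2 - q.2| := by
      have : (-c * p.1) - (-c * q.1) = -c * (p.1 - q.1) := by ring
      rw [this, abs_mul, abs_neg]
      exact mul_le_mul (le_max_right _ _) (le_max_left _ _) (abs_nonneg _)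
        (le_trans zero_le_one (le_max_left _ _))
    exact max_le h1 h2
  -- continuity of f on Ici 0
  have hcont : ContinuousOn f (Ici 0) := by
    apply ContinuousOn.prodMk
    · exact (hsmooth₁.continuousOn.sub hsmooth₂.continuousOn)
    · exact ((hsmooth₁.continuousOn_derivWithin (uniqueDiffOn_Ici 0) (by simp)).sub
        (hsmooth₂.continuousOn_derivWithin (uniqueDiffOn_Ici 0) (by simp)))
  -- derivative of f
  have hf' : ∀ t ∈ Ici (0:ℝ), HasDerivWithinAt f (v t (f t)) (Ici t) t := by
    intro t ht
    rcases eq_or_lt_of_le (mem_Ici.1 ht) with rfl | htpos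
    · -- t = 0
      have hw₁ : HasDerivWithinAt ψ₁ 1 (Ici 0) 0 := by
        have := ((hsmooth₁.differentiableOn (by simp)) 0 self_mem_Ici).hasDerivWithinAt
        rwa [e₁] at this
      have hw₂ : HasDerivWithinAt ψ₂ 1 (Ici 0) 0 := by
        have := ((hsmooth₂.differentiableOn (by simp)) 0 self_mem_Ici).hasDerivWithinAt
        rwa [e₂] at this
      have hdg₁ : HasDerivWithinAt g₁ 0 (Ici 0) 0 := by
        have := (((hsmooth₁.derivWithin (m := (⊤ : ℕ∞)) (uniqueDiffOn_Ici 0) (by simp)).differentiableOn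
          (by simp)) 0 self_mem_Ici).hasDerivWithinAt
        rwa [e₃] at this
      have hdg₂ : HasDerivWithinAt g₂ 0 (Ici 0) 0 := by
        have := (((hsmooth₂.derivWithin (m := (⊤ : ℕ∞)) (uniqueDiffOn_Ici 0) (by simp)).differentiableOn
          (by simp)) 0 self_mem_Ici).hasDerivWithinAt
        rwa [e₄] at this
      have hval : v 0 (f 0) = (0, 0) := by
        simp [hv, hf, hg₁, hg₂, hinit₁₀, hinit₂₀, e₁, e₂]
      rw [hval]
      have : ((0:ℝ), (0:ℝ)) = (((1:ℝ) - 1 : ℝ), ((0:ℝ) - 0 : ℝ)) := by norm_num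
      rw [this]
      exact (hw₁.sub hw₂).prodMk (hdg₁.sub hdg₂)
    · -- t > 0
      have hmem : Ici (0:ℝ) ∈ nhds t := Ici_mem_nhds htpos
      have hψo₁ : ContDiffOn ℝ (⊤ : ℕ∞) ψ₁ (Ioi 0) := hsmooth₁.mono Ioi_subset_Ici_self
      have hψo₂ : ContDiffOn ℝ (⊤ : ℕ∞) ψ₂ (Ioi 0) := hsmooth₂.mono Ioi_subset_Ici_self
      have hD₁ : ContDiffOn ℝ (⊤ : ℕ∞) (deriv ψ₁) (Ioi 0) := hψo₁.deriv_of_isOpen isOpen_Ioi (by simp)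
      have hD₂ : ContDiffOn ℝ (⊤ : ℕ∞) (deriv ψ₂) (Ioi 0) := hψo₂.deriv_of_isOpen isOpen_Ioi (by simp)
      have ht' : t ∈ Ioi (0:ℝ) := htpos
      have hda₁ : HasDerivAt ψ₁ (deriv ψ₁ t) t :=
        ((hψo₁.contDiffAt (isOpen_Ioi.mem_nhds ht')).differentiableAt (by simp)).hasDerivAt
      have hda₂ : HasDerivAt ψ₂ (deriv ψ₂ t) t :=
        ((hψo₂.contDiffAt (isOpen_Ioi.mem_nhds ht')).differentiableAt (by simp)).hasDerivAt
      have hdb₁ : HasDerivAt (deriv ψ₁) (deriv (deriv ψ₁) t) t :=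
        ((hD₁.contDiffAt (isOpen_Ioi.mem_nhds ht')).differentiableAt (by simp)).hasDerivAt
      have hdb₂ : HasDerivAt (deriv ψ₂) (deriv (deriv ψ₂) t) t :=
        ((hD₂.contDiffAt (isOpen_Ioi.mem_nhds ht')).differentiableAt (by simp)).hasDerivAt
      -- g₁ agrees with deriv ψ₁ near t
      have hEq₁ : g₁ =ᶠ[nhds t] deriv ψ₁ := by
        filter_upwards [isOpen_Ioi.mem_nhds ht'] with s hs
        exact derivWithin_of_mem_nhds (Ici_mem_nhds (mem_Ioi.1 hs))
      have hEq₂ : g₂ =ᶠ[nhds t] deriv ψ₂ := by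
        filter_upwards [isOpen_Ioi.mem_nhds ht'] with s hs
        exact derivWithin_of_mem_nhds (Ici_mem_nhds (mem_Ioi.1 hs))
      have hgt₁ : g₁ t = deriv ψ₁ t := derivWithin_of_mem_nhds hmem
      have hgt₂ : g₂ t = deriv ψ₂ t := derivWithin_of_mem_nhds hmem
      have hdg₁ : HasDerivAt g₁ (deriv (deriv ψ₁) t) t := hdb₁.congr_of_eventuallyEq hEq₁
      have hdg₂ : HasDerivAt g₂ (deriv (deriv ψ₂) t) t := hdb₂.congr_of_eventuallyEq hEq₂
      have hval : v t (f t) = (g₁ t - g₂ t, -c * (ψ₁ t - ψ₂ t)) := rfl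
      rw [hval]
      have hfst : HasDerivAt (fun s => ψ₁ s - ψ₂ s) (g₁ t - g₂ t) t := by
        rw [hgt₁, hgt₂]; exact hda₁.sub hda₂
      have hsnd : HasDerivAt (fun s => g₁ s - g₂ s) (-c * (ψ₁ t - ψ₂ t)) t := by
        have := hdg₁.sub hdg₂
        rw [hA₁ t htpos, hA₂ t htpos] at this
        rw [show -c * (ψ₁ t - ψ₂ t) = -(β / ↑n) * ψ₁ t - -(β / ↑n) * ψ₂ t by ring]
        exact this
      exact (hfst.prodMk hsnd).hasDerivWithinAt
  -- zero solution
  have hzero' : ∀ t ∈ Ici (0:ℝ),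
      HasDerivWithinAt (fun _ : ℝ => ((0:ℝ), (0:ℝ))) (v t ((0:ℝ), (0:ℝ))) (Ici t) t := by
    intro t ht
    have : v t ((0:ℝ), (0:ℝ)) = (0, 0) := by simp [hv]
    rw [this]
    exact hasDerivWithinAt_const t _ _
  have hinit : f 0 = ((0:ℝ), (0:ℝ)) := by
    simp [hf, hg₁, hg₂, hinit₁₀, hinit₂₀, e₁, e₂]
  intro r hr
  have := ODE_solution_unique (v := v) (K := K) hlip
    (hcont.mono (Icc_subset_Ici_self : Icc (0:ℝ) r ⊆ Ici 0))
    (fun t htm => hf' t (Ico_subset_Ici_self htm))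
    ((continuous_const (y := ((0:ℝ),(0:ℝ)))).continuousOn)
    (fun t htm => hzero' t (Ico_subset_Ici_self htm))
    hinit (right_mem_Icc.2 hr)
  have h1 : ψ₁ r - ψ₂ r = 0 := congrArg Prod.fst this
  linarith
end

section
/- Let n ≥ 2 be an integer and β < 0, and set α = √(−β/n). Then the function ψ(r) = α⁻¹ sinh(αr) is a solution of the initial value problem 2ψ''(r) + (n−2)((ψ'(r))² − 1)/ψ(r) + βψ(r) = 0 on (0,∞), ψ(0) = 0, ψ'(0) = 1, ψ''(0) = 0, and it is the unique solution: any function in C^∞([0,∞),ℝ), positive on (0,∞), solving this problem equals α⁻¹ sinh(αr). -/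
open Set Filter Topology


lemma constIci_of_deriv_zero {f : ℝ → ℝ} (hc : ContinuousOn f (Ici 0))
    (hd : ∀ r, 0 < r → HasDerivAt f 0 r) : ∀ r, 0 ≤ r → f r = f 0 := by
  intro r hr
  rcases eq_or_lt_of_le hr with h | h
  · rw [← h]
  · have key : ∀ ε ∈ Ioo (0:ℝ) r, f r = f ε := by
      intro ε hε
      have hcont : ContinuousOn f (Icc ε r) :=
        hc.mono (fun x hx => le_trans hε.1.le hx.1)
      have hderiv : ∀ x ∈ Ico ε r, HasDerivWithinAt f 0 (Ici x) x :=
        fun x hx => (hd x (lt_of_lt_of_le hε.1 hx.1)).hasDerivWithinAt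
      exact constant_of_has_deriv_right_zero hcont hderiv r ⟨hε.2.le, le_rfl⟩
    have h1 : Tendsto f (𝓝[>] (0:ℝ)) (𝓝 (f 0)) :=
      ((hc 0 self_mem_Ici).mono_left (nhdsWithin_mono 0 Ioi_subset_Ici_self))
    have h2 : Tendsto f (𝓝[>] (0:ℝ)) (𝓝 (f r)) := by
      have hev : ∀ᶠ ε in 𝓝[>] (0:ℝ), f ε = f r := by
        filter_upwards [Ioo_mem_nhdsGT_of_mem ⟨le_refl (0:ℝ), h⟩] with ε hε
        exact (key ε hε).symm
      exact Tendsto.congr' (by filter_upwards [hev] with ε hε using hε.symm) tendsto_const_nhds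
    exact tendsto_nhds_unique h2 h1


/-- For `β < 0` and `α = √(-β/n)`, the function `r ↦ α⁻¹ sinh(α r)` is the unique solution
of the IVP `2ψ'' + (n-2)((ψ')²-1)/ψ + βψ = 0`, `ψ(0)=0`, `ψ'(0)=1`, `ψ''(0)=0`,
among smooth functions on `[0,∞)` positive on `(0,∞)`. -/
theorem hyperbolic_unique_solution_constant_scalar_curvature_ODE
    (n : ℕ) (hn : 2 ≤ n) (β : ℝ) (hβ : β < 0) (α : ℝ) (hα : α = Real.sqrt (-β / n)) :
    (ContDiffOn ℝ (⊤ : ℕ∞) (fun r => α⁻¹ * Real.sinh (α * r)) (Ici 0) ∧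
     (∀ r > (0 : ℝ), 0 < α⁻¹ * Real.sinh (α * r)) ∧
     α⁻¹ * Real.sinh (α * 0) = 0 ∧
     derivWithin (fun r => α⁻¹ * Real.sinh (α * r)) (Ici 0) 0 = 1 ∧
     derivWithin (derivWithin (fun r => α⁻¹ * Real.sinh (α * r)) (Ici 0)) (Ici 0) 0 = 0 ∧
     (∀ r > (0 : ℝ),
       2 * deriv (deriv (fun r => α⁻¹ * Real.sinh (α * r))) r
         + ((n : ℝ) - 2) * ((deriv (fun r => α⁻¹ * Real.sinh (α * r)) r) ^ 2 - 1)
             / (α⁻¹ * Real.sinh (α * r))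
         + β * (α⁻¹ * Real.sinh (α * r)) = 0)) ∧
    (∀ ψ : ℝ → ℝ,
      ContDiffOn ℝ (⊤ : ℕ∞) ψ (Ici 0) →
      (∀ r > (0 : ℝ), 0 < ψ r) →
      ψ 0 = 0 →
      derivWithin ψ (Ici 0) 0 = 1 →
      derivWithin (derivWithin ψ (Ici 0)) (Ici 0) 0 = 0 →
      (∀ r > (0 : ℝ),
        2 * deriv (deriv ψ) r + ((n : ℝ) - 2) * ((deriv ψ r) ^ 2 - 1) / ψ r + β * ψ r = 0) →
      ∀ r ≥ (0 : ℝ), ψ r = α⁻¹ * Real.sinh (α * r)) := by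
  constructor
  · have hn0 : (0:ℝ) < (n:ℝ) := by
      have : 0 < n := lt_of_lt_of_le (by norm_num) hn
      exact_mod_cast this
    have hquot : (0:ℝ) < -β / n := div_pos (neg_pos.2 hβ) hn0
    have hα0 : 0 < α := hα ▸ Real.sqrt_pos.2 hquot
    have hα2 : α ^ 2 = -β / n := by rw [hα]; exact Real.sq_sqrt hquot.le
    set f : ℝ → ℝ := fun r => α⁻¹ * Real.sinh (α * r) with hfdef
    have hdf : ∀ r : ℝ, HasDerivAt f (Real.cosh (α * r)) r := by
      intro r
      have h1 : HasDerivAt (fun r : ℝ => α * r) α r := by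
        simpa using (hasDerivAt_id r).const_mul α
      have h2 : HasDerivAt (fun r : ℝ => Real.sinh (α * r)) (Real.cosh (α * r) * α) r :=
        (Real.hasDerivAt_sinh (α * r)).comp r h1
      have h3 := h2.const_mul α⁻¹
      rw [mul_comm (Real.cosh (α * r)) α, inv_mul_cancel_left₀ hα0.ne'] at h3
      exact h3
    have hdf2 : ∀ r : ℝ, HasDerivAt (fun r : ℝ => Real.cosh (α * r)) (α * Real.sinh (α * r)) r := by
      intro r
      have h1 : HasDerivAt (fun r : ℝ => α * r) α r := by
        simpa using (hasDerivAt_id r).const_mul α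
      have h2 : HasDerivAt (fun r : ℝ => Real.cosh (α * r)) (Real.sinh (α * r) * α) r :=
        (Real.hasDerivAt_cosh (α * r)).comp r h1
      simpa [mul_comm] using h2
    have hderiv_f : deriv f = fun r => Real.cosh (α * r) := funext fun r => (hdf r).deriv
    have hderiv2 : ∀ r, deriv (deriv f) r = α * Real.sinh (α * r) := by
      intro r; rw [hderiv_f]; exact (hdf2 r).deriv
    refine ⟨?_, ?_, ?_, ?_, ?_, ?_⟩
    · exact (contDiff_const.mul (Real.contDiff_sinh.comp (contDiff_const.mul contDiff_id))).contDiffOn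
    · intro r hr
      exact mul_pos (inv_pos.2 hα0) (Real.sinh_pos_iff.2 (mul_pos hα0 hr))
    · simp
    · rw [(hdf 0).differentiableAt.derivWithin (uniqueDiffOn_Ici 0 0 self_mem_Ici), (hdf 0).deriv]
      simp
    · have heq : EqOn (derivWithin f (Ici 0)) (fun r => Real.cosh (α * r)) (Ici 0) := by
        intro x hx
        rw [(hdf x).differentiableAt.derivWithin (uniqueDiffOn_Ici 0 x hx), (hdf x).deriv]
      rw [derivWithin_congr heq (heq self_mem_Ici),
        (hdf2 0).differentiableAt.derivWithin (uniqueDiffOn_Ici 0 0 self_mem_Ici), (hdf2 0).deriv]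
      simp
    · intro r hr
      have hS : 0 < Real.sinh (α * r) := Real.sinh_pos_iff.2 (mul_pos hα0 hr)
      rw [hderiv2, hderiv_f]
      have hc : Real.cosh (α * r) ^ 2 - 1 = Real.sinh (α * r) ^ 2 := by
        rw [Real.cosh_sq]; ring
      have key : (n : ℝ) * α ^ 2 = -β := by
        rw [hα2]; field_simp
      field_simp [hc]
      linear_combination α ^ 2 * ((n:ℝ) - 2) * hc + Real.sinh (α * r) ^ 2 * key
  · have hn0 : (0:ℝ) < (n:ℝ) := by
      have : 0 < n := lt_of_lt_of_le (by norm_num) hn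
      exact_mod_cast this
    have hquot : (0:ℝ) < -β / n := div_pos (neg_pos.2 hβ) hn0
    have hα0 : 0 < α := hα ▸ Real.sqrt_pos.2 hquot
    have hα2 : α ^ 2 = -β / n := by rw [hα]; exact Real.sq_sqrt hquot.le
    intro ψ hψ hpos hψ0 hψ'0 _hψ''0 hODE
    set g : ℝ → ℝ := derivWithin ψ (Ici 0) with hgdef
    have hmem : ∀ {s : ℝ}, 0 < s → Ici (0:ℝ) ∈ 𝓝 s :=
      fun hs => mem_of_superset (isOpen_Ioi.mem_nhds hs) Ioi_subset_Ici_self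
    have hgderiv : ∀ s, 0 < s → g s = deriv ψ s :=
      fun s hs => derivWithin_of_mem_nhds (hmem hs)
    have hψd : ∀ s, 0 < s → HasDerivAt ψ (deriv ψ s) s :=
      fun s hs => ((hψ.contDiffAt (hmem hs)).differentiableAt (by simp)).hasDerivAt
    have hd2 : ContDiffOn ℝ (⊤ : ℕ∞) (deriv ψ) (Ioi 0) :=
      (hψ.mono Ioi_subset_Ici_self).deriv_of_isOpen isOpen_Ioi (by simp)
    have hψd2 : ∀ s, 0 < s → HasDerivAt (deriv ψ) (deriv (deriv ψ) s) s :=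
      fun s hs => ((hd2.contDiffAt (isOpen_Ioi.mem_nhds hs)).differentiableAt (by simp)).hasDerivAt
    have hgcont : ContinuousOn g (Ici 0) :=
      hψ.continuousOn_derivWithin (uniqueDiffOn_Ici 0) (by simp)
    have hψcont : ContinuousOn ψ (Ici 0) := hψ.continuousOn
    set x : ℝ := (n:ℝ) - 2 with hxdef
    have hx0 : 0 ≤ x := by
      have : (2:ℝ) ≤ n := by exact_mod_cast hn
      simp [hxdef]; linarith
    -- The first integral F
    set F : ℝ → ℝ := fun s => (ψ s) ^ x * ((g s) ^ 2 - 1) + (β / n) * (ψ s) ^ (x + 2)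
      with hFdef
    have hFcont : ContinuousOn F (Ici 0) := by
      apply ContinuousOn.add
      · exact (hψcont.rpow_const (fun s _ => Or.inr hx0)).mul
          ((hgcont.pow 2).sub continuousOn_const)
      · exact continuousOn_const.mul
          (hψcont.rpow_const (fun s _ => Or.inr (by linarith)))
    have hF0 : F 0 = 0 := by
      have h1 : g 0 = 1 := hψ'0
      have h2 : (0:ℝ) ^ (x + 2) = 0 := Real.zero_rpow (by linarith)
      simp [hFdef, hψ0, h1, h2]
    have hFd : ∀ s, 0 < s → HasDerivAt F 0 s := by
      intro s hs
      have hp : 0 < ψ s := hpos s hs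
      set p := ψ s
      set q := deriv ψ s
      set q2 := deriv (deriv ψ) s
      -- version with deriv ψ instead of g
      set F' : ℝ → ℝ := fun t => (ψ t) ^ x * ((deriv ψ t) ^ 2 - 1) + (β / n) * (ψ t) ^ (x + 2)
        with hF'def
      have hev : F =ᶠ[𝓝 s] F' := by
        filter_upwards [isOpen_Ioi.mem_nhds hs] with t ht
        simp only [hFdef, hF'def, hgderiv t ht]
      have h1 : HasDerivAt (fun t => (ψ t) ^ x) (x * p ^ (x - 1) * q) s := by
        have h := (hψd s hs).rpow_const (p := x) (Or.inl hp.ne')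
        convert h using 1
        ring
      have h2 : HasDerivAt (fun t => (deriv ψ t) ^ 2 - 1) (2 * q ^ 1 * q2) s :=
        ((hψd2 s hs).pow 2).sub_const 1
      have h3 : HasDerivAt (fun t => (ψ t) ^ (x + 2)) ((x + 2) * p ^ (x + 1) * q) s := by
        have h := (hψd s hs).rpow_const (p := x + 2) (Or.inl hp.ne')
        rw [show x + 2 - 1 = x + 1 by ring] at h
        convert h using 1
        ring
      have hD : HasDerivAt F'
          ((x * p ^ (x - 1) * q) * (q ^ 2 - 1) + p ^ x * (2 * q ^ 1 * q2)
            + (β / n) * ((x + 2) * p ^ (x + 1) * q)) s :=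
        (h1.mul h2).add (h3.const_mul (β / n))
      have hbracket : x * (q ^ 2 - 1) + 2 * p * q2 + β * p ^ 2 = 0 := by
        have hODEs := hODE s hs
        have : ((n:ℝ) - 2) * (q ^ 2 - 1) / p = x * (q ^ 2 - 1) / p := by rw [hxdef]
        rw [this] at hODEs
        field_simp at hODEs
        nlinarith [hODEs]
      have hval : (x * p ^ (x - 1) * q) * (q ^ 2 - 1) + p ^ x * (2 * q ^ 1 * q2)
            + (β / n) * ((x + 2) * p ^ (x + 1) * q) = 0 := by
        have e1 : p ^ x = p ^ (x - 1) * p := by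
          rw [← Real.rpow_add_one hp.ne' (x - 1)]; ring_nf
        have e2 : p ^ (x + 1) = p ^ (x - 1) * p ^ 2 := by
          rw [← Real.rpow_natCast p 2, ← Real.rpow_add hp]; ring_nf
        have e3 : (β / n) * (x + 2) = β := by
          have : x + 2 = (n:ℝ) := by rw [hxdef]; ring
          rw [this]; field_simp
        calc (x * p ^ (x - 1) * q) * (q ^ 2 - 1) + p ^ x * (2 * q ^ 1 * q2)
            + (β / n) * ((x + 2) * p ^ (x + 1) * q)
            = p ^ (x - 1) * q * (x * (q ^ 2 - 1) + 2 * p * q2 + ((β / n) * (x + 2)) * p ^ 2) := by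
              rw [e1, e2]; ring
          _ = 0 := by rw [e3, hbracket, mul_zero]
      rw [hev.hasDerivAt_iff]
      rw [← hval]
      exact hD
    have hFzero : ∀ s, 0 ≤ s → F s = 0 := by
      intro s hs
      rw [constIci_of_deriv_zero hFcont hFd s hs, hF0]
    -- consequence: g ^ 2 = 1 + α ^ 2 ψ ^ 2 on Ioi 0
    have hgsq : ∀ s, 0 < s → (g s) ^ 2 = 1 + α ^ 2 * (ψ s) ^ 2 := by
      intro s hs
      have hp : 0 < ψ s := hpos s hs
      have hF := hFzero s hs.le
      have e2 : (ψ s) ^ (x + 2) = (ψ s) ^ x * (ψ s) ^ 2 := by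
        rw [← Real.rpow_natCast (ψ s) 2, ← Real.rpow_add hp]; norm_num
      rw [hFdef] at hF
      simp only [e2] at hF
      have hpx : (0:ℝ) < (ψ s) ^ x := Real.rpow_pos_of_pos hp x
      have : (g s) ^ 2 - 1 + (β / n) * (ψ s) ^ 2 = 0 := by
        have h2 : (ψ s) ^ x * ((g s) ^ 2 - 1 + (β / n) * (ψ s) ^ 2) = 0 := by
          linear_combination hF
        rcases mul_eq_zero.1 h2 with h | h
        · exact absurd h hpx.ne'
        · exact h
      have hab : α ^ 2 = -(β / n) := by rw [hα2]; ring
      rw [hab]; linarith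
    have hgpos : ∀ s, 0 ≤ s → 0 < g s := by
      intro s hs
      rcases eq_or_lt_of_le hs with h | h
      · rw [← h, hψ'0]; norm_num
      · by_contra hle
        push_neg at hle
        have hne : g s ≠ 0 := by
          intro h0
          have := hgsq s h
          rw [h0] at this
          nlinarith [sq_nonneg (ψ s), sq_nonneg α]
        have hlt : g s < 0 := lt_of_le_of_ne hle hne
        have hiv := intermediate_value_Icc' h.le (hgcont.mono (fun t ht => ht.1))
        have h0mem : (0:ℝ) ∈ Icc (g s) (g 0) := by
          rw [hψ'0]; exact ⟨hlt.le, by norm_num⟩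
        obtain ⟨c, hc, hgc⟩ := hiv h0mem
        rcases eq_or_lt_of_le hc.1 with hc0 | hc0
        · rw [← hc0] at hgc; rw [hψ'0] at hgc; norm_num at hgc
        · have := hgsq c hc0
          rw [hgc] at this
          nlinarith [sq_nonneg (ψ c), sq_nonneg α]
    have hgsqrt : ∀ s, 0 < s → deriv ψ s = Real.sqrt (1 + α ^ 2 * (ψ s) ^ 2) := by
      intro s hs
      rw [← hgderiv s hs, ← hgsq s hs]
      exact (Real.sqrt_sq (hgpos s hs.le).le).symm
    -- the function G
    set G : ℝ → ℝ := fun s => Real.arsinh (α * ψ s) - α * s with hGdef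
    have hGcont : ContinuousOn G (Ici 0) :=
      (Real.continuous_arsinh.comp_continuousOn (continuousOn_const.mul hψcont)).sub
        ((continuous_const.mul continuous_id).continuousOn)
    have hGd : ∀ s, 0 < s → HasDerivAt G 0 s := by
      intro s hs
      have hp : 0 < ψ s := hpos s hs
      have h1 : HasDerivAt (fun t => α * ψ t) (α * deriv ψ s) s := (hψd s hs).const_mul α
      have h2 : HasDerivAt (fun t => Real.arsinh (α * ψ t))
          ((Real.sqrt (1 + (α * ψ s) ^ 2))⁻¹ * (α * deriv ψ s)) s :=
        by have := (Real.hasDerivAt_arsinh (α * ψ s)).comp s h1; exact this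
      have h3 : HasDerivAt (fun t : ℝ => α * t) α s := by
        simpa using (hasDerivAt_id s).const_mul α
      have h4 := h2.sub h3
      have hkey : (Real.sqrt (1 + (α * ψ s) ^ 2))⁻¹ * (α * deriv ψ s) - α = 0 := by
        have e1 : (α * ψ s) ^ 2 = α ^ 2 * (ψ s) ^ 2 := by ring
        have hsq : (0:ℝ) < 1 + α ^ 2 * (ψ s) ^ 2 := by positivity
        rw [e1, hgsqrt s hs]
        have hsqrt : 0 < Real.sqrt (1 + α ^ 2 * (ψ s) ^ 2) := Real.sqrt_pos.2 hsq
        field_simp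
        ring
      rw [← hkey]
      exact h4
    have hG0 : G 0 = 0 := by simp [hGdef, hψ0]
    have hGzero : ∀ s, 0 ≤ s → G s = 0 := by
      intro s hs
      rw [constIci_of_deriv_zero hGcont hGd s hs, hG0]
    intro r hr
    have hGr : Real.arsinh (α * ψ r) - α * r = 0 := hGzero r hr
    have harsinh : Real.arsinh (α * ψ r) = α * r := by linarith
    have : α * ψ r = Real.sinh (α * r) := by
      rw [← harsinh, Real.sinh_arsinh]
    field_simp
    linarith [this]
end

section
/- Let n ≥ 2 be an integer and β = 0. Then ψ(r) = r is a solution of the initial value problem 2ψ''(r) + (n−2)((ψ'(r))² − 1)/ψ(r) = 0 on (0,∞), ψ(0) = 0, ψ'(0) = 1, ψ''(0) = 0, and it is the unique solution: any function in C^∞([0,∞),ℝ), positive on (0,∞), solving this problem equals the identity function r ↦ r. -/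
open Set

/-- For `β = 0`, the identity `ψ(r) = r` is the unique solution of the IVP
`2ψ'' + (n-2)((ψ')²-1)/ψ = 0`, `ψ(0)=0`, `ψ'(0)=1`, `ψ''(0)=0`,
among smooth functions on `[0,∞)` positive on `(0,∞)`. -/
theorem euclidean_unique_solution_constant_scalar_curvature_ODE
    (n : ℕ) (hn : 2 ≤ n) :
    (ContDiffOn ℝ (⊤ : ℕ∞) (fun r : ℝ => r) (Ici 0) ∧
     (∀ r > (0 : ℝ), 0 < r) ∧
     (fun r : ℝ => r) 0 = 0 ∧
     derivWithin (fun r : ℝ => r) (Ici 0) 0 = 1 ∧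
     derivWithin (derivWithin (fun r : ℝ => r) (Ici 0)) (Ici 0) 0 = 0 ∧
     (∀ r > (0 : ℝ),
       2 * deriv (deriv (fun r : ℝ => r)) r
         + ((n : ℝ) - 2) * ((deriv (fun r : ℝ => r) r) ^ 2 - 1) / r = 0)) ∧
    (∀ ψ : ℝ → ℝ,
      ContDiffOn ℝ (⊤ : ℕ∞) ψ (Ici 0) →
      (∀ r > (0 : ℝ), 0 < ψ r) →
      ψ 0 = 0 →
      derivWithin ψ (Ici 0) 0 = 1 →
      derivWithin (derivWithin ψ (Ici 0)) (Ici 0) 0 = 0 →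
      (∀ r > (0 : ℝ),
        2 * deriv (deriv ψ) r + ((n : ℝ) - 2) * ((deriv ψ r) ^ 2 - 1) / ψ r = 0) →
      ∀ r ≥ (0 : ℝ), ψ r = r) := by
  constructor
  · have hid : ∀ x ∈ Ici (0:ℝ), derivWithin (fun r : ℝ => r) (Ici 0) x = 1 := by
      intro x hx
      exact derivWithin_id x (Ici 0) ((uniqueDiffOn_Ici 0) x hx)
    refine ⟨contDiffOn_id, fun r hr => hr, rfl, hid 0 self_mem_Ici, ?_, ?_⟩
    · rw [derivWithin_congr hid (hid 0 self_mem_Ici)]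
      exact congrFun (derivWithin_fun_const (s := Ici (0:ℝ)) (c := (1:ℝ))) 0
    · intro r hr
      simp
  · intro ψ hψ hpos hψ0 hψ'0 _hψ''0 hODE
    -- `g` is the first derivative on `[0,∞)`, `h` the second.
    set g : ℝ → ℝ := derivWithin ψ (Ici 0) with hg
    set h : ℝ → ℝ := derivWithin g (Ici 0) with hh
    have hgC : ContDiffOn ℝ (⊤ : ℕ∞) g (Ici 0) :=
      hψ.derivWithin (uniqueDiffOn_Ici 0) (by simp)
    have hψcont : ContinuousOn ψ (Ici 0) := hψ.continuousOn
    have hgcont : ContinuousOn g (Ici 0) := hgC.continuousOn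
    -- derivative facts at interior points
    have hmem : ∀ r : ℝ, 0 < r → Ici (0:ℝ) ∈ nhds r := fun r hr =>
      Ici_mem_nhds hr
    have hψderiv : ∀ r : ℝ, 0 < r → HasDerivAt ψ (g r) r := by
      intro r hr
      have := (hψ.differentiableOn (by simp) r (le_of_lt hr)).hasDerivWithinAt
      exact this.hasDerivAt (hmem r hr)
    have hgderiv : ∀ r : ℝ, 0 < r → HasDerivAt g (h r) r := by
      intro r hr
      have := (hgC.differentiableOn (by simp) r (le_of_lt hr)).hasDerivWithinAt
      exact this.hasDerivAt (hmem r hr)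
    have hderiv_eq : ∀ r : ℝ, 0 < r → deriv ψ r = g r := fun r hr =>
      ((hψderiv r hr).deriv)
    have hderiv2_eq : ∀ r : ℝ, 0 < r → deriv (deriv ψ) r = h r := by
      intro r hr
      have he : deriv ψ =ᶠ[nhds r] g := by
        filter_upwards [Ioi_mem_nhds hr] with x hx
        exact hderiv_eq x hx
      rw [he.deriv_eq]
      exact (hgderiv r hr).deriv
    -- the key ODE consequence: 2 h ψ = -(n-2)(g²-1)
    have key : ∀ r : ℝ, 0 < r →
        2 * h r * ψ r = -(((n : ℝ) - 2) * (g r ^ 2 - 1)) := by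
      intro r hr
      have h0 := hODE r hr
      rw [hderiv2_eq r hr, hderiv_eq r hr] at h0
      have hψne : ψ r ≠ 0 := ne_of_gt (hpos r hr)
      field_simp at h0
      linarith
    -- conservation law: F = ψ^(n-2)(g²-1) has zero derivative on (0,∞)
    set F : ℝ → ℝ := fun x => ψ x ^ (n - 2) * (g x ^ 2 - 1) with hF
    have hFcont : ContinuousOn F (Ici 0) := by
      exact (hψcont.pow _).mul ((hgcont.pow 2).sub continuousOn_const)
    have hFderiv : ∀ r : ℝ, 0 < r → HasDerivAt F 0 r := by
      intro r hr
      have h1 : HasDerivAt F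
          (((n - 2 : ℕ) : ℝ) * ψ r ^ (n - 2 - 1) * g r * (g r ^ 2 - 1)
            + ψ r ^ (n - 2) * (2 * g r ^ 1 * h r)) r := by
        exact ((hψderiv r hr).pow (n - 2)).mul
          (((hgderiv r hr).pow 2).sub_const 1)
      convert h1 using 1
      have hk := key r hr
      rcases eq_or_lt_of_le hn with hn2 | hn3
      · -- n = 2
        have : n - 2 = 0 := by omega
        rw [this] at *
        have hc : ((n : ℝ) - 2) = 0 := by rw [← hn2]; norm_num
        rw [hc] at hk
        have : h r = 0 := by
          have hψpos := hpos r hr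
          nlinarith
        simp [this]
      · -- n ≥ 3
        have h3 : 3 ≤ n := hn3
        have hpow : ψ r ^ (n - 2) = ψ r ^ (n - 2 - 1) * ψ r := by
          rw [← pow_succ]
          congr 1
          omega
        have hc : ((n - 2 : ℕ) : ℝ) = (n : ℝ) - 2 := by
          push_cast [Nat.cast_sub hn]
          ring
        rw [hpow, hc]
        linear_combination (-(ψ r ^ (n - 2 - 1) * g r)) * hk
    -- F is constant on (0,∞), with value F 0 = 0 by continuity
    have hFzero : ∀ r : ℝ, 0 < r → F r = 0 := by
      intro r hr
      have hconst : ∀ s : ℝ, 0 < s → s ≤ r → F r = F s := by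
        intro s hs hsr
        have := constant_of_has_deriv_right_zero (f := F) (a := s) (b := r)
          (hFcont.mono (by intro x hx; exact le_trans (le_of_lt hs) hx.1))
          (fun x hx => ((hFderiv x (lt_of_lt_of_le hs hx.1)).hasDerivWithinAt))
        exact this r ⟨hsr, le_refl r⟩
      have hF0 : F 0 = 0 := by
        simp only [hF, hψ0]
        rcases eq_or_lt_of_le hn with hn2 | hn3
        · have : n - 2 = 0 := by omega
          rw [this]
          have : g 0 = 1 := hψ'0
          simp [this]
        · have : n - 2 ≠ 0 := by omega
          simp [zero_pow this]
      have htendsto : Filter.Tendsto F (nhdsWithin 0 (Ioi 0)) (nhds (F 0)) := by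
        have := (hFcont 0 self_mem_Ici).tendsto
        exact this.mono_left (nhdsWithin_mono 0 Ioi_subset_Ici_self)
      have htendsto' : Filter.Tendsto F (nhdsWithin 0 (Ioi 0)) (nhds (F r)) := by
        have heq : F =ᶠ[nhdsWithin 0 (Ioi 0)] fun _ => F r := by
          filter_upwards [Ioo_mem_nhdsGT_of_mem ⟨le_refl (0:ℝ), hr⟩] with x hx
          exact (hconst x hx.1 (le_of_lt hx.2)).symm
        exact (tendsto_const_nhds.congr' heq.symm)
      have := tendsto_nhds_unique htendsto' htendsto
      rw [this, hF0]
    -- hence g² = 1 on (0,∞)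
    have hgsq : ∀ r : ℝ, 0 < r → g r ^ 2 = 1 := by
      intro r hr
      have := hFzero r hr
      have hψne : ψ r ^ (n - 2) ≠ 0 := pow_ne_zero _ (ne_of_gt (hpos r hr))
      have : g r ^ 2 - 1 = 0 := by
        rcases mul_eq_zero.mp this with h1 | h1
        · exact absurd h1 hψne
        · exact h1
      linarith
    -- g never vanishes on [0,∞) and g 0 = 1, so g = 1
    have hg0 : g 0 = 1 := hψ'0
    have hgone : ∀ r : ℝ, 0 ≤ r → g r = 1 := by
      intro r hr
      rcases eq_or_lt_of_le hr with hr0 | hr0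
      · rw [← hr0]; exact hg0
      have hsq := hgsq r hr0
      rcases sq_eq_one_iff.mp hsq with h1 | hneg
      · exact h1
      · -- g r = -1 : otherwise g hits 0, contradiction
        exfalso
        have hsub : Icc (0:ℝ) r ⊆ Ici 0 := fun x hx => hx.1
        have hIVT := intermediate_value_Icc' (le_of_lt hr0) (hgcont.mono hsub)
        have h0mem : (0:ℝ) ∈ Icc (g r) (g 0) := by
          rw [hg0, hneg]; constructor <;> norm_num
        obtain ⟨c, hc, hgc⟩ := hIVT h0mem
        rcases eq_or_lt_of_le hc.1 with hc0 | hc0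
        · rw [← hc0] at hgc; rw [hg0] at hgc; norm_num at hgc
        · have := hgsq c hc0
          rw [hgc] at this; norm_num at this
    -- integrate: ψ r - r is constant on [0, r]
    intro r hr
    set φ : ℝ → ℝ := fun x => ψ x - x with hφ
    have hφcont : ContinuousOn φ (Icc 0 r) := by
      exact ((hψcont.mono (fun x hx => hx.1)).sub continuousOn_id)
    have hφderiv : ∀ x ∈ Ico (0:ℝ) r, HasDerivWithinAt φ 0 (Ici x) x := by
      intro x hx
      have hd : HasDerivWithinAt ψ (g x) (Ici 0) x :=
        (hψ.differentiableOn (by simp) x hx.1).hasDerivWithinAt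
      have hd' : HasDerivWithinAt ψ (g x) (Ici x) x :=
        hd.mono (Ici_subset_Ici.mpr hx.1)
      have : HasDerivWithinAt φ (g x - 1) (Ici x) x :=
        hd'.sub (hasDerivWithinAt_id x (Ici x))
      rwa [hgone x hx.1, sub_self] at this
    have := constant_of_has_deriv_right_zero hφcont hφderiv r ⟨hr, le_refl r⟩
    simp only [hφ, hψ0] at this
    linarith
end

section
/- Let n ≥ 2 be an integer and β > 0. Then there is no function ψ ∈ C^∞([0,∞),ℝ) with ψ(r) > 0 for all r > 0, ψ(0) = 0, ψ'(0) = 1, ψ''(0) = 0 satisfying 2ψ''(r) + (n−2)((ψ'(r))² − 1)/ψ(r) + βψ(r) = 0 for all r ∈ (0,∞). (Indeed any such solution would have to equal α⁻¹ sin(αr) with α = √(β/n), which vanishes at r = π/α, contradicting positivity on (0,∞).) -/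
open Set Filter Topology

private lemma aux_pow_cancel (m : ℕ) (p : ℝ) : (m : ℝ) * p ^ (m - 1) * p = (m : ℝ) * p ^ m := by
  cases m with
  | zero => simp
  | succ k => rw [Nat.succ_sub_one, pow_succ]; ring

/-- A function continuous on `[0, b]` with vanishing derivative on `(0, ∞)` takes the same
value at `b` as at `0`. -/
private lemma const_aux {f : ℝ → ℝ} {b : ℝ} (hb : 0 < b)
    (hc : ContinuousOn f (Icc 0 b)) (hd : ∀ r > (0 : ℝ), HasDerivAt f 0 r) :
    f b = f 0 := by
  have key : ∀ ε ∈ Ioc (0 : ℝ) b, f b = f ε := by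
    intro ε hε
    exact constant_of_has_deriv_right_zero
      (hc.mono (Icc_subset_Icc hε.1.le le_rfl))
      (fun x hx => (hd x (lt_of_lt_of_le hε.1 hx.1)).hasDerivWithinAt)
      b (right_mem_Icc.2 hε.2)
  have hne : (𝓝[Ioc (0 : ℝ) b] (0 : ℝ)).NeBot := by
    rw [← mem_closure_iff_nhdsWithin_neBot, closure_Ioc hb.ne]
    exact left_mem_Icc.2 hb.le
  have ht : Tendsto f (𝓝[Ioc (0 : ℝ) b] 0) (𝓝 (f 0)) :=
    (hc.continuousWithinAt (left_mem_Icc.2 hb.le)).mono Ioc_subset_Icc_self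
  have ht2 : Tendsto f (𝓝[Ioc (0 : ℝ) b] 0) (𝓝 (f b)) := by
    refine Tendsto.congr' ?_ (tendsto_const_nhds (x := f b))
    filter_upwards [self_mem_nhdsWithin] with x hx
    exact key x hx
  exact tendsto_nhds_unique ht2 ht

/-- For `β > 0` there is no globally positive solution of the IVP
`2ψ'' + (n-2)((ψ')²-1)/ψ + βψ = 0`, `ψ(0)=0`, `ψ'(0)=1`, `ψ''(0)=0` on `(0,∞)`. -/
theorem no_positive_solution_constant_scalar_curvature_ODE_positive_beta
    (n : ℕ) (hn : 2 ≤ n) (β : ℝ) (hβ : 0 < β) :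
    ¬ ∃ ψ : ℝ → ℝ,
      ContDiffOn ℝ (⊤ : ℕ∞) ψ (Ici 0) ∧
      (∀ r > (0 : ℝ), 0 < ψ r) ∧
      ψ 0 = 0 ∧
      derivWithin ψ (Ici 0) 0 = 1 ∧
      derivWithin (derivWithin ψ (Ici 0)) (Ici 0) 0 = 0 ∧
      (∀ r > (0 : ℝ),
        2 * deriv (deriv ψ) r + ((n : ℝ) - 2) * ((deriv ψ r) ^ 2 - 1) / ψ r + β * ψ r = 0) := by
  rintro ⟨ψ, hsm, hpos, h0, h1, -, hODE⟩
  set φ : ℝ → ℝ := derivWithin ψ (Ici 0) with hφdef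
  have hnR : (0 : ℝ) < n := by positivity
  set m : ℕ := n - 2 with hm
  have hcast : (n : ℝ) = (m : ℝ) + 2 := by
    have h : m + 2 = n := Nat.sub_add_cancel hn
    push_cast [← h]; ring
  -- continuity facts
  have hψc : ContinuousOn ψ (Ici 0) := hsm.continuousOn
  have hφsm : ContinuousOn φ (Ici 0) :=
    (hsm.derivWithin (uniqueDiffOn_Ici 0) (m := (⊤ : ℕ∞)) (by simp)).continuousOn
  -- pointwise facts on (0, ∞)
  have hIoi : ContDiffOn ℝ (⊤ : ℕ∞) ψ (Ioi 0) := hsm.mono Ioi_subset_Ici_self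
  have hφeq : ∀ r > (0 : ℝ), φ r = deriv ψ r := fun r hr =>
    derivWithin_of_mem_nhds (Ici_mem_nhds hr)
  have hψd : ∀ r > (0 : ℝ), HasDerivAt ψ (φ r) r := by
    intro r hr
    have := (hIoi.contDiffAt (isOpen_Ioi.mem_nhds hr)).differentiableAt (by simp)
    rw [hφeq r hr]
    exact this.hasDerivAt
  have hφd : ∀ r > (0 : ℝ), HasDerivAt φ (deriv (deriv ψ) r) r := by
    intro r hr
    have hd : ContDiffOn ℝ (⊤ : ℕ∞) (deriv ψ) (Ioi 0) := hIoi.deriv_of_isOpen isOpen_Ioi (by simp)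
    have hda := ((hd.contDiffAt (isOpen_Ioi.mem_nhds hr)).differentiableAt (by simp)).hasDerivAt
    refine hda.congr_of_eventuallyEq ?_
    filter_upwards [isOpen_Ioi.mem_nhds hr] with x hx
    exact hφeq x hx
  -- rewrite the ODE without division
  have hode2 : ∀ r > (0 : ℝ), 2 * deriv (deriv ψ) r * ψ r
      = -(m : ℝ) * ((deriv ψ r) ^ 2 - 1) - β * (ψ r) ^ 2 := by
    intro r hr
    have h := hODE r hr
    rw [hcast] at h
    have h2 : ((m : ℝ) + 2 - 2) = (m : ℝ) := by ring
    rw [h2] at h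
    have hp0 : ψ r ≠ 0 := ne_of_gt (hpos r hr)
    field_simp at h
    nlinarith [h]
  -- the energy function
  set c : ℝ := β / n with hc
  have hcpos : 0 < c := by positivity
  have hcne : c * ((m : ℝ) + 2) = β := by
    rw [hc, hcast]; field_simp
  set E : ℝ → ℝ := fun r => ψ r ^ m * (φ r ^ 2 - 1) + c * ψ r ^ (m + 2) with hE
  have hEc : ContinuousOn E (Ici 0) := by
    apply ContinuousOn.add
    · exact (hψc.pow m).mul ((hφsm.pow 2).sub continuousOn_const)
    · exact continuousOn_const.mul (hψc.pow (m + 2))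
  have hE0 : E 0 = 0 := by simp [hE, h0, h1]
  have hEd : ∀ r > (0 : ℝ), HasDerivAt E 0 r := by
    intro r hr
    have hp := hpos r hr
    have hp0 : ψ r ≠ 0 := ne_of_gt hp
    have hode' := hode2 r hr
    rw [← hφeq r hr] at hode'
    have hD := ((((hψd r hr).pow m).mul (((hφd r hr).pow 2).sub_const 1)).add
      (((hψd r hr).pow (m + 2)).const_mul c))
    have hs2 : deriv (deriv ψ) r = deriv (deriv ψ) r := rfl
    refine hD.congr_deriv (Eq.symm ?_)
    try simp only [pow_one, Nat.add_sub_cancel, Pi.pow_apply]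
    apply mul_right_cancel₀ hp0
    push_cast
    have hpm := aux_pow_cancel m (ψ r)
    have hpm2 : (ψ r) ^ (m + 1) * ψ r = (ψ r) ^ (m + 2) := by rw [← pow_succ]
    linear_combination (-(φ r) * ((φ r) ^ 2 - 1)) * hpm - (ψ r) ^ m * (φ r) * hode'
      - c * ((m : ℝ) + 2) * (φ r) * hpm2 - (φ r) * (ψ r) ^ (m + 2) * hcne
  have hEzero : ∀ r > (0 : ℝ), E r = 0 := by
    intro r hr
    have := const_aux hr (hEc.mono (Icc_subset_Ici_self)) hEd
    rw [hE0] at this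
    exact this
  -- the first-order relation
  have hrel : ∀ r > (0 : ℝ), (deriv ψ r) ^ 2 - 1 = -c * (ψ r) ^ 2 := by
    intro r hr
    have hp := hpos r hr
    have hz := hEzero r hr
    simp only [hE] at hz
    rw [← hφeq r hr]
    have hfac : (ψ r) ^ m * ((φ r ^ 2 - 1) + c * (ψ r) ^ 2) = 0 := by
      linear_combination hz
    have hpm : (0 : ℝ) < (ψ r) ^ m := pow_pos hp m
    have := (mul_eq_zero.mp hfac).resolve_left (ne_of_gt hpm)
    linarith
  -- hence the linear ODE ψ'' = -c ψ
  have hd2 : ∀ r > (0 : ℝ), deriv (deriv ψ) r = -c * ψ r := by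
    intro r hr
    have hp := hpos r hr
    have h1' := hode2 r hr
    rw [hrel r hr] at h1'
    have hp0 : ψ r ≠ 0 := ne_of_gt hp
    have : (2 * deriv (deriv ψ) r + 2 * c * ψ r) * ψ r = 0 := by
      linear_combination h1' + (ψ r) ^ 2 * hcne
    have h3 := (mul_eq_zero.mp this).resolve_right hp0
    linarith
  -- the Wronskian with sin
  set α : ℝ := Real.sqrt c with hα
  have hαpos : 0 < α := Real.sqrt_pos.mpr hcpos
  have hα2 : α ^ 2 = c := Real.sq_sqrt hcpos.le
  set W : ℝ → ℝ := fun x => ψ x * (α * Real.cos (α * x)) - φ x * Real.sin (α * x) with hW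
  have hWc : ContinuousOn W (Ici 0) := by
    apply ContinuousOn.sub
    · exact hψc.mul (Continuous.continuousOn (by fun_prop))
    · exact hφsm.mul (Continuous.continuousOn (by fun_prop))
  have hW0 : W 0 = 0 := by simp [hW, h0, h1]
  have hWd : ∀ r > (0 : ℝ), HasDerivAt W 0 r := by
    intro r hr
    have hcos : HasDerivAt (fun x : ℝ => α * Real.cos (α * x))
        (α * (-Real.sin (α * r) * (α * 1))) r :=
      (((hasDerivAt_id r).const_mul α).cos).const_mul α
    have hsin : HasDerivAt (fun x : ℝ => Real.sin (α * x)) (Real.cos (α * r) * (α * 1)) r :=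
      ((hasDerivAt_id r).const_mul α).sin
    have hDW := ((hψd r hr).mul hcos).sub ((hφd r hr).mul hsin)
    refine hDW.congr_deriv (Eq.symm ?_)
    have hs := hd2 r hr
    linear_combination Real.sin (α * r) * hs + ψ r * Real.sin (α * r) * hα2
  -- evaluate at π / α
  set b : ℝ := Real.pi / α with hb
  have hbpos : 0 < b := div_pos Real.pi_pos hαpos
  have hWb : W b = 0 := by
    rw [const_aux hbpos (hWc.mono Icc_subset_Ici_self) hWd, hW0]
  have hab : α * b = Real.pi := by
    rw [hb]; field_simp
  rw [hW, ] at hWb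
  simp only [hab, Real.sin_pi, Real.cos_pi] at hWb
  have hψb := hpos b hbpos
  nlinarith [hWb, hψb, hαpos]
end

section
/- Let δ > 0 and let g : [0,δ) → ℝ be continuous with g(0) = 0. Suppose that |g(r)| ≤ (1/r)·∫₀^r |g(t)| dt for every r ∈ (0,δ). Then g(r) = 0 for every r ∈ [0,δ). (Proof idea: h(r) := ∫₀^r |g(t)| dt satisfies h'(r) ≤ h(r)/r, so r ↦ h(r)/r is nonincreasing on (0,δ); since h(t)/t → |g(0)| = 0 as t → 0⁺, it follows that h ≡ 0.) -/
open Set Filter Topology intervalIntegral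

theorem antitoneOn_div_self_of_hasDerivAt {f f' : ℝ → ℝ} {D : Set ℝ} (hD : Convex ℝ D)
    (hpos : D ⊆ Ioi 0) (hf : ∀ x ∈ D, HasDerivAt f (f' x) x)
    (hle : ∀ x ∈ D, f' x * x ≤ f x) :
    AntitoneOn (fun x => f x / x) D := by
  have hquot : ∀ x ∈ D, HasDerivAt (fun x => f x / x) ((f' x * x - f x) / x ^ 2) x :=
    fun x hx => by simpa using (hf x hx).fun_div (hasDerivAt_id' (x := x)) (hpos hx).ne'
  refine antitoneOn_of_hasDerivWithinAt_nonpos hD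
    (fun x hx => (hquot x hx).continuousAt.continuousWithinAt)
    (fun x hx => (hquot x (interior_subset hx)).hasDerivWithinAt) fun x hx => ?_
  exact div_nonpos_of_nonpos_of_nonneg (sub_nonpos.2 (hle x (interior_subset hx))) (sq_nonneg x)

theorem AntitoneOn.le_of_tendsto_nhdsGT {β : Type*} [TopologicalSpace β] [Preorder β]
    [ClosedIciTopology β] {φ : ℝ → β} {a b : ℝ} {L : β} (hφ : AntitoneOn φ (Ioo a b))
    (hlim : Tendsto φ (𝓝[>] a) (𝓝 L)) {x : ℝ} (hx : x ∈ Ioo a b) : φ x ≤ L := by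
  refine ge_of_tendsto hlim ?_
  filter_upwards [Ioo_mem_nhdsGT hx.1] with t ht
  exact hφ ⟨ht.1, ht.2.trans hx.2⟩ hx ht.2.le

theorem tendsto_integral_div_sub_nhdsGT {c : ℝ → ℝ} {a b : ℝ} (hab : a < b)
    (hc : ContinuousOn c (Ico a b)) :
    Tendsto (fun t => (∫ s in a..t, c s) / (t - a)) (𝓝[>] a) (𝓝 (c a)) := by
  have hmeas : StronglyMeasurableAtFilter c (𝓝[>] a) := by
    rw [← nhdsWithin_Ioo_eq_nhdsGT hab]
    exact (hc.mono Ioo_subset_Ico_self).stronglyMeasurableAtFilter_nhdsWithin measurableSet_Ioo a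
  have hderiv : HasDerivWithinAt (fun t => ∫ s in a..t, c s) (c a) (Ici a) a :=
    integral_hasDerivWithinAt_right IntervalIntegrable.refl hmeas
      ((hc a ⟨le_rfl, hab⟩).mono_of_mem_nhdsWithin (Ico_mem_nhdsGT hab))
  have hslope := (hasDerivWithinAt_iff_tendsto_slope' (s := Ioi a) (lt_irrefl a)).1
    (hderiv.mono Ioi_subset_Ici_self)
  simpa [slope_fun_def_field] using hslope

theorem gronwall_vanishing_lemma_general
    (δ : ℝ) (g : ℝ → ℝ)
    (hg : ContinuousOn g (Ico 0 δ))
    (hg0 : g 0 = 0)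
    (hbound : ∀ r, 0 < r → r < δ → |g r| ≤ (1 / r) * ∫ t in (0 : ℝ)..r, |g t|) :
    ∀ r, 0 ≤ r → r < δ → g r = 0 := by
  intro r hr0 hrδ
  rcases hr0.eq_or_lt with rfl | hr
  · exact hg0
  set h : ℝ → ℝ := fun s => ∫ t in (0 : ℝ)..s, |g t|
  have hc : ContinuousOn (fun t => |g t|) (Ico 0 δ) := hg.abs
  have hcIoo : ContinuousOn (fun t => |g t|) (Ioo 0 δ) := hc.mono Ioo_subset_Ico_self
  have hderiv : ∀ s ∈ Ioo 0 δ, HasDerivAt h |g s| s := fun s hs =>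
    integral_hasDerivAt_right
      ((hc.mono fun t ht => ⟨ht.1, ht.2.trans_lt hs.2⟩).intervalIntegrable_of_Icc hs.1.le)
      (hcIoo.stronglyMeasurableAtFilter isOpen_Ioo s hs)
      (hcIoo.continuousAt (isOpen_Ioo.mem_nhds hs))
  have hanti : AntitoneOn (fun s => h s / s) (Ioo 0 δ) :=
    antitoneOn_div_self_of_hasDerivAt (convex_Ioo 0 δ) Ioo_subset_Ioi_self hderiv fun s hs => by
      simpa only [one_div_mul_eq_div, le_div_iff₀ hs.1] using hbound s hs.1 hs.2
  have hlim : Tendsto (fun s => h s / s) (𝓝[>] 0) (𝓝 0) := by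
    simpa [hg0] using tendsto_integral_div_sub_nhdsGT (hr.trans hrδ) hc
  have hslope : h r / r ≤ 0 := hanti.le_of_tendsto_nhdsGT hlim ⟨hr, hrδ⟩
  rw [← one_div_mul_eq_div] at hslope
  exact abs_nonpos_iff.1 ((hbound r hr hrδ).trans hslope)

/-- Gronwall-type vanishing lemma: if `g` is continuous on `[0,δ)`, `g(0)=0` and
`|g(r)| ≤ (1/r)∫₀ʳ |g(t)| dt` for all `r ∈ (0,δ)`, then `g ≡ 0` on `[0,δ)`. -/
theorem gronwall_vanishing_lemma
    (δ : ℝ) (hδ : 0 < δ) (g : ℝ → ℝ)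
    (hg : ContinuousOn g (Ico 0 δ))
    (hg0 : g 0 = 0)
    (hbound : ∀ r, 0 < r → r < δ → |g r| ≤ (1 / r) * ∫ t in (0 : ℝ)..r, |g t|) :
    ∀ r, 0 ≤ r → r < δ → g r = 0 :=
  gronwall_vanishing_lemma_general δ g hg hg0 hbound
end

section
/- Let f ∈ C¹(ℝ) satisfy f(0) = 0 and f(s)·s − f'(s)·s² < 0 for every s ≠ 0, and set F(s) := ∫₀^s f(t) dt. Then 2F(s) − f(s)·s < 0 for every s ≠ 0. -/
/-!
With `g s = 2 F(s) - f(s) s` we have `g 0 = 0` and `g' s = f s - f' s · s`, so the hypothesis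
says `s · g' s < 0` for `s ≠ 0`: `g` increases up to `0` and decreases after it.
-/

open intervalIntegral

theorem lt_apply_zero_of_mul_deriv_neg {g : ℝ → ℝ} (hg : Continuous g)
    (hderiv : ∀ x, x ≠ 0 → x * deriv g x < 0) {s : ℝ} (hs : s ≠ 0) : g s < g 0 := by
  rcases hs.lt_or_gt with hneg | hpos
  · refine strictMonoOn_of_deriv_pos (convex_Icc s 0) hg.continuousOn (fun x hx => ?_)
      (Set.left_mem_Icc.2 hneg.le) (Set.right_mem_Icc.2 hneg.le) hneg
    rw [interior_Icc] at hx
    exact pos_of_mul_neg_right (hderiv x hx.2.ne) hx.2.le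
  · refine strictAntiOn_of_deriv_neg (convex_Icc 0 s) hg.continuousOn (fun x hx => ?_)
      (Set.left_mem_Icc.2 hpos.le) (Set.right_mem_Icc.2 hpos.le) hpos
    rw [interior_Icc] at hx
    exact neg_of_mul_neg_right (hderiv x hx.1.ne') hx.1.le

theorem hasDerivAt_two_mul_integral_sub_mul_self {f : ℝ → ℝ} (hf : Continuous f) {s : ℝ}
    (hfs : DifferentiableAt ℝ f s) :
    HasDerivAt (fun u => 2 * (∫ t in (0 : ℝ)..u, f t) - f u * u) (f s - deriv f s * s) s := by
  have hF : HasDerivAt (fun u => ∫ t in (0 : ℝ)..u, f t) (f s) s :=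
    integral_hasDerivAt_right (hf.intervalIntegrable _ _) (hf.stronglyMeasurableAtFilter _ _)
      hf.continuousAt
  exact ((hF.const_mul 2).sub (hfs.hasDerivAt.mul (hasDerivAt_id' s))).congr_deriv (by ring)

theorem two_F_lt_fs_general
    (f : ℝ → ℝ) (hf : ContDiff ℝ 1 f)
    (hsuper : ∀ s : ℝ, s ≠ 0 → f s * s - deriv f s * s ^ 2 < 0) :
    ∀ s : ℝ, s ≠ 0 → 2 * (∫ t in (0 : ℝ)..s, f t) - f s * s < 0 := by
  intro s hs
  have hdiff : Differentiable ℝ f := hf.differentiable one_ne_zero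
  have hg x := hasDerivAt_two_mul_integral_sub_mul_self hf.continuous (hdiff x)
  have hcont := continuous_iff_continuousAt.2 fun x => (hg x).continuousAt
  have hmax := lt_apply_zero_of_mul_deriv_neg hcont
    (fun x hx => by rw [(hg x).deriv]; linarith [hsuper x hx]) hs
  simpa using hmax

/-- If `f ∈ C¹(ℝ)`, `f(0)=0` and `f(s)s - f'(s)s² < 0` for all `s ≠ 0`, then
`2F(s) - f(s)s < 0` for all `s ≠ 0`, where `F(s) = ∫₀ˢ f`. -/
theorem two_F_lt_fs
    (f : ℝ → ℝ) (hf : ContDiff ℝ 1 f) (hf0 : f 0 = 0)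
    (hsuper : ∀ s : ℝ, s ≠ 0 → f s * s - deriv f s * s ^ 2 < 0) :
    ∀ s : ℝ, s ≠ 0 → 2 * (∫ t in (0 : ℝ)..s, f t) - f s * s < 0 :=
  two_F_lt_fs_general f hf hsuper
end

section
/- Let g : (0,∞) → ℝ be continuous. Assume: (a) there exists t₁ > 0 such that g(t) > 0 for all t ∈ (0,t₁); (b) there exists T > 0 such that g(t) < 0 for all t ≥ T; (c) g is differentiable at every zero point and g'(t) < 0 whenever g(t) = 0. Then g has exactly one zero t* in (0,∞); moreover g(t) > 0 for all t ∈ (0,t*) and g(t) < 0 for all t ∈ (t*,∞). -/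
/-!
Every zero `z` of `g` is a strict down-crossing: `g > 0` just left of `z` and `g < 0` just right
of it. Two zeros `z₁ < z₂` are therefore impossible: pick `a` just right of `z₁` with `g a < 0`
and let `c` be the least zero in `[a, z₂]`; by the intermediate value theorem `g < 0` on `[a, c)`,
contradicting `g > 0` just left of `c`. So there is at most one zero, hence `g` has constant sign
on each side of it, and a zero exists by the intermediate value theorem.
-/

open Set Filter Topology

variable {g : ℝ → ℝ} {s : Set ℝ}

lemma HasDerivAt.eventually_nhdsLT_pos_of_neg {g' z : ℝ} (hd : HasDerivAt g g' z)
    (hz : g z = 0) (hg' : g' < 0) : ∀ᶠ x in 𝓝[<] z, 0 < g x := by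
  have hslope := (hasDerivAt_iff_tendsto_slope_left_right.1 hd).1.eventually_lt_const hg'
  filter_upwards [hslope, self_mem_nhdsWithin] with x hx (hxz : x < z)
  rw [slope_def_field, hz, sub_zero] at hx
  by_contra! h
  exact hx.not_ge (div_nonneg_of_nonpos h (sub_nonpos.2 hxz.le))

lemma HasDerivAt.eventually_nhdsGT_neg_of_neg {g' z : ℝ} (hd : HasDerivAt g g' z)
    (hz : g z = 0) (hg' : g' < 0) : ∀ᶠ x in 𝓝[>] z, g x < 0 := by
  have hslope := (hasDerivAt_iff_tendsto_slope_left_right.1 hd).2.eventually_lt_const hg'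
  filter_upwards [hslope, self_mem_nhdsWithin] with x hx (hzx : z < x)
  rw [slope_def_field, hz, sub_zero] at hx
  by_contra! h
  exact hx.not_ge (div_nonneg h (sub_nonneg.2 hzx.le))

lemma IsPreconnected.pos_of_ne_zero {X : Type*} [TopologicalSpace X] {f : X → ℝ} {t : Set X}
    (ht : IsPreconnected t) (hf : ContinuousOn f t) (hne : ∀ x ∈ t, f x ≠ 0) {a x : X}
    (ha : a ∈ t) (hfa : 0 < f a) (hx : x ∈ t) : 0 < f x := by
  by_contra! h
  obtain ⟨c, hc, hc0⟩ := ht.intermediate_value hx ha hf ⟨h, hfa.le⟩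
  exact hne c hc hc0

lemma IsPreconnected.neg_of_ne_zero {X : Type*} [TopologicalSpace X] {f : X → ℝ} {t : Set X}
    (ht : IsPreconnected t) (hf : ContinuousOn f t) (hne : ∀ x ∈ t, f x ≠ 0) {a x : X}
    (ha : a ∈ t) (hfa : f a < 0) (hx : x ∈ t) : f x < 0 := by
  by_contra! h
  obtain ⟨c, hc, hc0⟩ := ht.intermediate_value ha hx hf ⟨hfa.le, h⟩
  exact hne c hc hc0

def CrossesDownAtZeros (g : ℝ → ℝ) (s : Set ℝ) : Prop :=
  ∀ z ∈ s, g z = 0 → ∃ g' < 0, HasDerivAt g g' z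

namespace CrossesDownAtZeros

variable (h : CrossesDownAtZeros g s) (hs : s.OrdConnected) (hg : ContinuousOn g s)
include h hs hg

lemma not_lt_of_zeros {z₁ z₂ : ℝ} (hz₁ : z₁ ∈ s) (hz₂ : z₂ ∈ s) (hgz₁ : g z₁ = 0)
    (hgz₂ : g z₂ = 0) : ¬ z₁ < z₂ := by
  intro h12
  obtain ⟨g₁', hg₁', hd₁⟩ := h z₁ hz₁ hgz₁
  obtain ⟨a, hga, haz₁, haz₂⟩ :=
    ((hd₁.eventually_nhdsGT_neg_of_neg hgz₁ hg₁').and (Ioo_mem_nhdsGT h12)).exists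
  have hIcc : Icc a z₂ ⊆ s := hs.out (hs.out hz₁ hz₂ ⟨haz₁.le, haz₂.le⟩) hz₂
  have hzeros : IsClosed (Icc a z₂ ∩ g ⁻¹' {0}) :=
    (hg.mono hIcc).preimage_isClosed_of_isClosed isClosed_Icc isClosed_singleton
  obtain ⟨c, ⟨hc, hgc⟩, hmin⟩ := (isCompact_Icc.of_isClosed_subset hzeros
    inter_subset_left).exists_isLeast ⟨z₂, ⟨⟨haz₂.le, le_rfl⟩, hgz₂⟩⟩
  have hac : a < c := hc.1.lt_of_ne fun hac => hga.ne (hac ▸ hgc)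
  have hneg : ∀ x ∈ Ico a c, g x < 0 := fun x hx =>
    isPreconnected_Ico.neg_of_ne_zero (hg.mono fun y hy => hIcc ⟨hy.1, hy.2.le.trans hc.2⟩)
      (fun y hy hy0 => hy.2.not_ge (hmin ⟨⟨hy.1, hy.2.le.trans hc.2⟩, hy0⟩))
      (left_mem_Ico.2 hac) hga hx
  obtain ⟨g', hg', hd⟩ := h c (hIcc hc) hgc
  obtain ⟨x, hgx, hx⟩ :=
    ((hd.eventually_nhdsLT_pos_of_neg hgc hg').and (Ioo_mem_nhdsLT hac)).exists
  exact hgx.not_gt (hneg x (Ioo_subset_Ico_self hx))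

lemma eq_of_zeros {z₁ z₂ : ℝ} (hz₁ : z₁ ∈ s) (hz₂ : z₂ ∈ s) (hgz₁ : g z₁ = 0)
    (hgz₂ : g z₂ = 0) : z₁ = z₂ :=
  le_antisymm (not_lt.1 (h.not_lt_of_zeros hs hg hz₂ hz₁ hgz₂ hgz₁))
    (not_lt.1 (h.not_lt_of_zeros hs hg hz₁ hz₂ hgz₁ hgz₂))

lemma pos_of_lt_zero {z x : ℝ} (hz : z ∈ s) (hgz : g z = 0) (hx : x ∈ s) (hxz : x < z) :
    0 < g x := by
  obtain ⟨g', hg', hd⟩ := h z hz hgz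
  obtain ⟨y, hgy, hxy, hyz⟩ :=
    ((hd.eventually_nhdsLT_pos_of_neg hgz hg').and (Ioo_mem_nhdsLT hxz)).exists
  have hIcc : Icc x y ⊆ s := hs.out hx (hs.out hx hz ⟨hxy.le, hyz.le⟩)
  refine isPreconnected_Icc.pos_of_ne_zero (hg.mono hIcc) (fun w hw hw0 => ?_)
    (right_mem_Icc.2 hxy.le) hgy (left_mem_Icc.2 hxy.le)
  exact (hw.2.trans_lt hyz).ne (h.eq_of_zeros hs hg (hIcc hw) hz hw0 hgz)

lemma neg_of_zero_lt {z x : ℝ} (hz : z ∈ s) (hgz : g z = 0) (hx : x ∈ s) (hzx : z < x) :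
    g x < 0 := by
  obtain ⟨g', hg', hd⟩ := h z hz hgz
  obtain ⟨y, hgy, hzy, hyx⟩ :=
    ((hd.eventually_nhdsGT_neg_of_neg hgz hg').and (Ioo_mem_nhdsGT hzx)).exists
  have hIcc : Icc y x ⊆ s := hs.out (hs.out hz hx ⟨hzy.le, hyx.le⟩) hx
  refine isPreconnected_Icc.neg_of_ne_zero (hg.mono hIcc) (fun w hw hw0 => ?_)
    (left_mem_Icc.2 hyx.le) hgy (right_mem_Icc.2 hyx.le)
  exact (hzy.trans_le hw.1).ne' (h.eq_of_zeros hs hg (hIcc hw) hz hw0 hgz)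

end CrossesDownAtZeros

/-- Fibering-map lemma: a continuous function on `(0,∞)`, positive near `0`,
eventually negative, and with strictly negative derivative at each of its zeros,
has exactly one zero `t*`; it is positive on `(0,t*)` and negative on `(t*,∞)`. -/
theorem fibering_map_unique_zero
    (g : ℝ → ℝ) (hg : ContinuousOn g (Ioi 0))
    (hpos : ∃ t₁ > (0 : ℝ), ∀ t, 0 < t → t < t₁ → 0 < g t)
    (hneg : ∃ T > (0 : ℝ), ∀ t ≥ T, g t < 0)
    (hdiff : ∀ t > (0 : ℝ), g t = 0 → DifferentiableAt ℝ g t)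
    (hderiv : ∀ t > (0 : ℝ), g t = 0 → deriv g t < 0) :
    ∃ tstar > (0 : ℝ), g tstar = 0 ∧
      (∀ t, 0 < t → t < tstar → 0 < g t) ∧
      (∀ t, tstar < t → g t < 0) ∧
      (∀ t > (0 : ℝ), g t = 0 → t = tstar) := by
  obtain ⟨t₁, ht₁, hp⟩ := hpos
  obtain ⟨T, hT, hn⟩ := hneg
  have hcross : CrossesDownAtZeros g (Ioi 0) := fun z hz hgz =>
    ⟨deriv g z, hderiv z hz hgz, (hdiff z hz hgz).hasDerivAt⟩
  obtain ⟨z, hz, hgz⟩ := isPreconnected_Ioi.intermediate_value (mem_Ioi.2 hT)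
    (mem_Ioi.2 (half_pos ht₁)) hg ⟨(hn T le_rfl).le, (hp _ (half_pos ht₁) (half_lt_self ht₁)).le⟩
  refine ⟨z, hz, hgz, fun t ht htz => ?_, fun t hzt => ?_, fun t ht hgt => ?_⟩
  · exact hcross.pos_of_lt_zero ordConnected_Ioi hg hz hgz ht htz
  · exact hcross.neg_of_zero_lt ordConnected_Ioi hg hz hgz (mem_Ioi.2 (hz.trans hzt)) hzt
  · exact hcross.eq_of_zeros ordConnected_Ioi hg ht hz hgt hgz
end
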